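/- Let A be an n×n complex matrix such that every eigenvalue μ ∈ spectrum ℂ A satisfies Re μ ≠ 0, let U be a unitary n×n matrix, let η ∈ {1, −1}, and suppose A = η • (U ⬝ Aᵀ ⬝ Uᴴ). Let F be a spectral sign of A, i.e. F⬝A = A⬝F, F⬝F = 1, and for every eigenvalue μ ∈ spectrum ℂ A and every v ∈ ℂⁿ with ((A − μ•1)^n) *ᵥ v = 0 one has F *ᵥ v = v if Re μ > 0 and F *ᵥ v = −v if Re μ < 0. Then F = η • (U ⬝ Fᵀ ⬝ Uᴴ). -/

import Mathlib

/-!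
Generalized eigenvectors of `A` span `ℂⁿ`, so a spectral sign is unique once no eigenvalue is
purely imaginary. Being a spectral sign survives transposition (a left generalized eigenvector
for `ν` is orthogonal to every right generalized eigenvector for `μ ≠ ν`, by Bézout for the
coprime polynomials `(X - ν)ⁿ` and `(X - μ)ⁿ`), similarity, and negating both matrices. Hence
`η • (U * Fᵀ * Uᴴ)` is a spectral sign of `η • (U * Aᵀ * Uᴴ) = A`, so it equals `F`.
-/

open Matrix

namespace Matrix

variable {ι : Type*} [Fintype ι] [DecidableEq ι]

theorem spectrum_transpose {R : Type*} [CommRing R] (A : Matrix ι ι R) :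
    spectrum R Aᵀ = spectrum R A := by
  ext μ
  simp only [spectrum.mem_iff, Algebra.algebraMap_eq_smul_one]
  rw [← isUnit_transpose (A := μ • 1 - A), transpose_sub, transpose_smul, transpose_one]

theorem mem_spectrum_of_pow_sub_smul_mulVec_eq_zero {R : Type*} [CommRing R]
    {A : Matrix ι ι R} {μ : R} {k : ℕ} {v : ι → R}
    (hv : ((A - μ • 1) ^ k) *ᵥ v = 0) (hv0 : v ≠ 0) : μ ∈ spectrum R A := by
  rw [spectrum.mem_iff, Algebra.algebraMap_eq_smul_one, ← IsUnit.neg_iff, neg_sub]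
  intro hunit
  obtain ⟨B, hB⟩ := (hunit.pow k).exists_left_inv
  apply hv0
  rw [← one_mulVec v, ← hB, ← mulVec_mulVec, hv, mulVec_zero]

theorem pow_sub_smul_mulVec_eq_zero_of_mem_maxGenEigenspace {K : Type*} [Field K]
    {A : Matrix ι ι K} {μ : K} {v : ι → K}
    (hv : v ∈ Module.End.maxGenEigenspace (toLinAlgEquiv' A) μ) :
    ((A - μ • 1) ^ Fintype.card ι) *ᵥ v = 0 := by
  rwa [Module.End.maxGenEigenspace_eq_genEigenspace_finrank, Module.End.mem_genEigenspace_nat,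
    Module.finrank_fintype_fun_eq_card, LinearMap.mem_ker,
    ← map_one (toLinAlgEquiv' (R := K) (n := ι)), ← map_smul, ← map_sub, ← map_pow,
    toLinAlgEquiv'_apply] at hv

theorem eq_top_of_genEigenvectors_mem {K : Type*} [Field K] [IsAlgClosed K]
    (A : Matrix ι ι K) {p : Submodule K (ι → K)}
    (h : ∀ μ ∈ spectrum K A, ∀ v, ((A - μ • 1) ^ Fintype.card ι) *ᵥ v = 0 → v ∈ p) :
    p = ⊤ := by
  rw [eq_top_iff, ← Module.End.iSup_maxGenEigenspace_eq_top (toLinAlgEquiv' A)]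
  refine iSup_le fun μ v hv => ?_
  have hv' := pow_sub_smul_mulVec_eq_zero_of_mem_maxGenEigenspace hv
  by_cases hv0 : v = 0
  · exact hv0 ▸ p.zero_mem
  · exact h μ (mem_spectrum_of_pow_sub_smul_mulVec_eq_zero hv' hv0) v hv'

open Polynomial in
theorem dotProduct_eq_zero_of_genEigenvectors {K : Type*} [Field K] {A : Matrix ι ι K}
    {μ ν : K} (hμν : μ ≠ ν) {k : ℕ} {w v : ι → K}
    (hw : w ᵥ* ((A - ν • 1) ^ k) = 0) (hv : ((A - μ • 1) ^ k) *ᵥ v = 0) : w ⬝ᵥ v = 0 := by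
  obtain ⟨p, q, hpq⟩ : IsCoprime ((X - C ν) ^ k) ((X - C μ) ^ k) :=
    (isCoprime_X_sub_C_of_isUnit_sub (sub_ne_zero_of_ne hμν.symm).isUnit).pow
  rw [mul_comm p] at hpq
  have hA : (A - ν • 1) ^ k * aeval A p + aeval A q * (A - μ • 1) ^ k = 1 := by
    simpa [Algebra.algebraMap_eq_smul_one] using congrArg (aeval A) hpq
  calc w ⬝ᵥ v = w ⬝ᵥ (((A - ν • 1) ^ k * aeval A p + aeval A q * (A - μ • 1) ^ k) *ᵥ v) := by
        rw [hA, one_mulVec]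
    _ = 0 := by
        rw [add_mulVec, dotProduct_add, ← mulVec_mulVec, ← mulVec_mulVec, dotProduct_mulVec, hw,
          hv, zero_dotProduct, mulVec_zero, dotProduct_zero, add_zero]

def IsSpectralSign (A F : Matrix ι ι ℂ) : Prop :=
  ∀ μ ∈ spectrum ℂ A, ∀ v : ι → ℂ, ((A - μ • 1) ^ Fintype.card ι) *ᵥ v = 0 →
    (0 < μ.re → F *ᵥ v = v) ∧ (μ.re < 0 → F *ᵥ v = -v)

namespace IsSpectralSign

variable {A F G : Matrix ι ι ℂ}

theorem exists_mulVec_eq_smul (hA : ∀ μ ∈ spectrum ℂ A, μ.re ≠ 0) (hF : IsSpectralSign A F)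
    {μ : ℂ} (hμ : μ ∈ spectrum ℂ A) {v : ι → ℂ} (hv : ((A - μ • 1) ^ Fintype.card ι) *ᵥ v = 0) :
    ∃ c : ℂ, F *ᵥ v = c • v := by
  rcases (hA μ hμ).lt_or_gt with hneg | hpos
  · exact ⟨-1, by rw [(hF μ hμ v hv).2 hneg, neg_one_smul]⟩
  · exact ⟨1, by rw [(hF μ hμ v hv).1 hpos, one_smul]⟩

theorem unique (hA : ∀ μ ∈ spectrum ℂ A, μ.re ≠ 0) (hF : IsSpectralSign A F)
    (hG : IsSpectralSign A G) : F = G := by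
  suffices LinearMap.eqLocus (toLin' F) (toLin' G) = ⊤ from
    toLin'.injective (LinearMap.eqLocus_eq_top.mp this)
  refine eq_top_of_genEigenvectors_mem A fun μ hμ v hv => ?_
  show F *ᵥ v = G *ᵥ v
  rcases (hA μ hμ).lt_or_gt with hneg | hpos
  · rw [(hF μ hμ v hv).2 hneg, (hG μ hμ v hv).2 hneg]
  · rw [(hF μ hμ v hv).1 hpos, (hG μ hμ v hv).1 hpos]

theorem transpose (hA : ∀ μ ∈ spectrum ℂ A, μ.re ≠ 0) (hF : IsSpectralSign A F) :
    IsSpectralSign Aᵀ Fᵀ := by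
  intro ν hν w hw
  rw [spectrum_transpose] at hν
  replace hw : w ᵥ* ((A - ν • 1) ^ Fintype.card ι) = 0 := by
    rwa [← mulVec_transpose, transpose_pow, transpose_sub, transpose_smul, transpose_one]
  suffices key : ∀ s : ℂ, (∀ v, ((A - ν • 1) ^ Fintype.card ι) *ᵥ v = 0 → F *ᵥ v = s • v) →
      Fᵀ *ᵥ w = s • w by
    refine ⟨fun hpos => ?_, fun hneg => ?_⟩
    · simpa using key 1 fun v hv => by simpa using (hF ν hν v hv).1 hpos
    · simpa using key (-1) fun v hv => by simpa using (hF ν hν v hv).2 hneg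
  intro s hs
  rw [← sub_eq_zero, ← dotProduct_eq_zero_iff]
  suffices LinearMap.ker (dotProductBilin ℂ ℂ (Fᵀ *ᵥ w - s • w)) = ⊤ from
    Submodule.eq_top_iff'.mp this
  refine eq_top_of_genEigenvectors_mem A fun μ hμ v hv => ?_
  rw [LinearMap.mem_ker, dotProductBilin_apply_apply, sub_dotProduct, mulVec_transpose,
    ← dotProduct_mulVec, smul_dotProduct, smul_eq_mul]
  by_cases hμν : μ = ν
  · rw [hs v (hμν ▸ hv), dotProduct_smul, smul_eq_mul, sub_self]
  · obtain ⟨c, hc⟩ := hF.exists_mulVec_eq_smul hA hμ hv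
    rw [hc, dotProduct_smul, dotProduct_eq_zero_of_genEigenvectors hμν hw hv, smul_zero,
      mul_zero, sub_zero]

theorem units_conj (hF : IsSpectralSign A F) (u : (Matrix ι ι ℂ)ˣ) :
    IsSpectralSign (u.val * A * u⁻¹.val) (u.val * F * u⁻¹.val) := by
  intro μ hμ v hv
  rw [spectrum.units_conjugate] at hμ
  have hconj : (u.val * A * u⁻¹.val - μ • 1) ^ Fintype.card ι =
      u.val * (A - μ • 1) ^ Fintype.card ι * u⁻¹.val := by
    rw [← Units.conj_pow, Matrix.mul_sub, Matrix.sub_mul, Matrix.mul_smul, Matrix.mul_one,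
      Matrix.smul_mul, u.mul_inv]
  have cancel : ∀ w : ι → ℂ, u.val *ᵥ (u⁻¹.val *ᵥ w) = w := fun w => by
    rw [mulVec_mulVec, u.mul_inv, one_mulVec]
  have hv' : ((A - μ • 1) ^ Fintype.card ι) *ᵥ (u⁻¹.val *ᵥ v) = 0 := by
    rw [hconj, ← mulVec_mulVec, ← mulVec_mulVec] at hv
    simpa [mulVec_mulVec] using congrArg (u⁻¹.val *ᵥ ·) hv
  refine ⟨fun hpos => ?_, fun hneg => ?_⟩
  · rw [← mulVec_mulVec, ← mulVec_mulVec, (hF μ hμ _ hv').1 hpos, cancel]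
  · rw [← mulVec_mulVec, ← mulVec_mulVec, (hF μ hμ _ hv').2 hneg, mulVec_neg, cancel]

theorem neg (hF : IsSpectralSign A F) : IsSpectralSign (-A) (-F) := by
  intro μ hμ v hv
  rw [← spectrum.neg_eq, Set.mem_neg] at hμ
  have hv' : ((A - (-μ) • 1) ^ Fintype.card ι) *ᵥ v = 0 := by
    rw [show -A - μ • 1 = (-1 : ℂ) • (A - (-μ) • 1) by module, _root_.smul_pow, smul_mulVec,
      smul_eq_zero] at hv
    exact hv.resolve_left (by simp)
  refine ⟨fun hpos => ?_, fun hneg => ?_⟩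
  · simp [neg_mulVec, (hF _ hμ v hv').2 (by simpa using hpos)]
  · simp [neg_mulVec, (hF _ hμ v hv').1 (by simpa using hneg)]

end IsSpectralSign

end Matrix

theorem stmt_12_general {n : ℕ} (A U F : Matrix (Fin n) (Fin n) ℂ) (η : ℂ)
    (hA : ∀ μ ∈ spectrum ℂ A, μ.re ≠ 0)
    (hU : U ∈ Matrix.unitaryGroup (Fin n) ℂ)
    (hη : η = 1 ∨ η = -1)
    (hsym : A = η • (U * Aᵀ * Uᴴ))
    (hF : ∀ μ ∈ spectrum ℂ A, ∀ v : Fin n → ℂ, ((A - μ • 1) ^ n) *ᵥ v = 0 →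
      (0 < μ.re → F *ᵥ v = v) ∧ (μ.re < 0 → F *ᵥ v = -v)) :
    F = η • (U * Fᵀ * Uᴴ) := by
  have hF : IsSpectralSign A F := by simpa [IsSpectralSign] using hF
  have hconj : IsSpectralSign (U * Aᵀ * Uᴴ) (U * Fᵀ * Uᴴ) :=
    (hF.transpose hA).units_conj (Unitary.toUnits ⟨U, hU⟩)
  have hsmul : IsSpectralSign (η • (U * Aᵀ * Uᴴ)) (η • (U * Fᵀ * Uᴴ)) := by
    rcases hη with rfl | rfl
    · simpa using hconj
    · simpa using hconj.neg
  rw [← hsym] at hsmul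
  exact hF.unique hA hsmul

theorem stmt_12 {n : ℕ} (A U F : Matrix (Fin n) (Fin n) ℂ) (η : ℂ)
    (hA : ∀ μ ∈ spectrum ℂ A, μ.re ≠ 0)
    (hU : U ∈ Matrix.unitaryGroup (Fin n) ℂ)
    (hη : η = 1 ∨ η = -1)
    (hsym : A = η • (U * Aᵀ * Uᴴ))
    (hFA : F * A = A * F) (hFF : F * F = 1)
    (hF : ∀ μ ∈ spectrum ℂ A, ∀ v : Fin n → ℂ, ((A - μ • 1) ^ n) *ᵥ v = 0 →
      (0 < μ.re → F *ᵥ v = v) ∧ (μ.re < 0 → F *ᵥ v = -v)) :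
    F = η • (U * Fᵀ * Uᴴ) :=
  stmt_12_general A U F η hA hU hη hsym hF
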